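/- Let i ≥ 5, and suppose that for every j with 5 ≤ j ≤ i, the Fermat number N_j is the smallest positive integer m satisfying (c_j)^m ∈ L_{j−1}. Then the elements c_i · c_0 and a_i · a_0 are primitive elements of L_i, i.e., each has multiplicative order ∏_{j=0}^{i} N_j = 2^(2^(i+1)) − 1, where a_0 = c_0. -/

import Mathlib

/-!
Each `L_n` is a quadratic extension of `L_{n-1}`, so it has `2^(2^n)` elements and is the set of
roots of `x^(2^(2^n)) = x`. Hence Frobenius swaps the roots `c_n` and `c_n + 1` of
`X^2 + X + a_{n-1}`, which gives `c_n^(N_n) = c_n (c_n + 1) = a_{n-1}`. Raising to the power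
`2^(2^n) - 1 = N_0 ⋯ N_{n-1}` kills `L_{n-1}^*`, so `c_n^(2^(2^n) - 1)` has order exactly `N_n`
(by minimality, or because `N_n` is prime for `n ≤ 4`), and the orders of `a_n` and `c_n` pick
up the factor `N_n`. From `a_n^(N_n) = a_{n-1}^(N_n + 1)` and `N_n + 1 = 3 (N_1 ⋯ N_{n-1} + 1)`,
induction gives `ord a_n = N_1 ⋯ N_n` for `n ≥ 1`, and then `ord c_n = N_n · ord a_{n-1}` for
`n ≥ 2`. Multiplying by `c_0`, of order `3 = N_0`, supplies the missing factor.
-/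

/-- The `j`-th Fermat number `N_j = 2^(2^j) + 1`. -/
def fermatN (j : ℕ) : ℕ := 2 ^ 2 ^ j + 1

/-- `conwayL c n` is the subfield `L_{n-1}` of the algebraic closure of `F_2`
generated over `F_2` by `c 0, …, c (n-1)`; in particular `conwayL c 0 = ⊥ = F_2`. -/
noncomputable def conwayL (c : ℕ → AlgebraicClosure (ZMod 2)) (n : ℕ) :
    IntermediateField (ZMod 2) (AlgebraicClosure (ZMod 2)) :=
  IntermediateField.adjoin (ZMod 2) (c '' Set.Iio n)

open Polynomial IntermediateField

theorem coprime_fermatN {j k : ℕ} (h : j ≠ k) : (fermatN j).Coprime (fermatN k) :=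
  Nat.coprime_fermatNumber_fermatNumber h

theorem coprime_three_prod_fermatN_Ioc (k : ℕ) :
    Nat.Coprime 3 (∏ j ∈ Finset.Ioc 0 k, fermatN j) :=
  Nat.Coprime.prod_right fun _ hj => coprime_fermatN (Finset.mem_Ioc.mp hj).1.ne

theorem coprime_fermatN_prod_Ioc (k : ℕ) :
    (fermatN (k + 1)).Coprime (∏ j ∈ Finset.Ioc 0 k, fermatN j) :=
  Nat.Coprime.prod_right fun _ hj =>
    coprime_fermatN ((Finset.mem_Ioc.mp hj).2.trans_lt k.lt_succ_self).ne'

theorem prod_fermatN_Icc_zero (k : ℕ) :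
    ∏ j ∈ Finset.Icc 0 k, fermatN j = 3 * ∏ j ∈ Finset.Ioc 0 k, fermatN j := by
  rw [Finset.Icc_eq_cons_Ioc k.zero_le, Finset.prod_cons]
  rfl

theorem prod_fermatN_range (n : ℕ) : ∏ j ∈ Finset.range n, fermatN j = 2 ^ 2 ^ n - 1 := by
  rw [show fermatN = Nat.fermatNumber from rfl, Nat.prod_fermatNumber, Nat.fermatNumber]
  omega

theorem coprime_prod_fermatN_Ioc_fermatN_succ_add_one (k : ℕ) :
    Nat.Coprime (∏ j ∈ Finset.Ioc 0 k, fermatN j) (fermatN (k + 1) + 1) := by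
  have h : fermatN (k + 1) + 1 = 3 * ((∏ j ∈ Finset.Ioc 0 k, fermatN j) + 1) := by
    have := prod_fermatN_range (k + 1)
    rw [Nat.range_succ_eq_Icc_zero, prod_fermatN_Icc_zero] at this
    rw [fermatN]
    have : 1 ≤ 2 ^ 2 ^ (k + 1) := Nat.one_le_two_pow
    omega
  rw [h]
  exact (coprime_three_prod_fermatN_Ioc k).symm.mul_right (Nat.coprime_self_add_right.mpr
    (Nat.coprime_one_right _))

theorem orderOf_eq_mul_orderOf_pow {G : Type*} [Monoid G] {y : G} {n : ℕ}
    (hcop : n.Coprime (orderOf (y ^ n))) (hdvd : n ∣ orderOf y) :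
    orderOf y = n * orderOf (y ^ n) :=
  Nat.dvd_antisymm (orderOf_dvd_of_pow_eq_one (by rw [pow_mul, pow_orderOf_eq_one]))
    (hcop.mul_dvd_of_dvd_of_dvd hdvd (orderOf_pow_dvd n))

theorem IntermediateField.mem_iff_pow_natCard_eq {k E : Type*} [Field k] [Field E] [Algebra k E]
    (K : IntermediateField k E) [Finite K] {x : E} : x ∈ K ↔ x ^ Nat.card K = x := by
  have hq : 1 < Nat.card K := Finite.one_lt_card
  have hP : (X ^ Nat.card K - X : E[X]) ≠ 0 := FiniteField.X_pow_card_sub_X_ne_zero E hq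
  have hroots : (X ^ Nat.card K - X : E[X]).rootSet E = {x | x ^ Nat.card K = x} := by
    ext x
    simp [mem_rootSet, hP, sub_eq_zero]
  have hsub : (K : Set E) ⊆ {x | x ^ Nat.card K = x} := by
    intro x hx
    let _ := Fintype.ofFinite K
    have := FiniteField.pow_card (⟨x, hx⟩ : K)
    rw [Fintype.card_eq_nat_card] at this
    exact congrArg Subtype.val this
  suffices (K : Set E) = {x | x ^ Nat.card K = x} from Set.ext_iff.mp this x
  refine Set.eq_of_subset_of_ncard_le hsub ?_ (hroots ▸ rootSet_finite _ E)
  calc {x | x ^ Nat.card K = x}.ncard ≤ (X ^ Nat.card K - X : E[X]).natDegree :=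
        hroots ▸ ncard_rootSet_le _ E
    _ = Nat.card K := FiniteField.X_pow_card_sub_X_natDegree_eq E hq
    _ = (K : Set E).ncard := (Nat.card_coe_set_eq _).symm

theorem natCard_adjoin_simple_of_sq_add_self_add {K E : Type*} [Field K] [Field E] [Algebra K E]
    [Finite K] {x : E} (b : K) (hx : x ∉ (algebraMap K E).range)
    (h : x ^ 2 + x + algebraMap K E b = 0) : Nat.card K⟮x⟯ = Nat.card K ^ 2 := by
  set P : K[X] := X ^ 2 + X + C b
  have hP : P.Monic := by unfold P; monicity!
  have hPx : aeval x P = 0 := by simpa [P] using h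
  have hint : IsIntegral K x := ⟨P, hP, by rwa [← aeval_def]⟩
  have hdeg : (minpoly K x).natDegree = 2 := by
    refine le_antisymm ?_ ((minpoly.two_le_natDegree_iff hint).mpr hx)
    calc (minpoly K x).natDegree ≤ P.natDegree := natDegree_le_natDegree (minpoly.min K x hP hPx)
      _ ≤ 2 := by unfold P; compute_degree
  have := adjoin.finiteDimensional hint
  rw [Module.natCard_eq_pow_finrank (K := K), adjoin.finrank hint, hdeg]

theorem CharTwo.eq_or_eq_add_one_of_sq_add_self_eq {R : Type*} [CommRing R] [IsDomain R]
    [CharP R 2] {x y : R} (h : y ^ 2 + y = x ^ 2 + x) : y = x ∨ y = x + 1 := by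
  have hfactor : (y + x) * (y + (x + 1)) = 0 := by
    linear_combination h + (x * y + x ^ 2 + x) * CharTwo.two_eq_zero (R := R)
  simpa only [mul_eq_zero, CharTwo.add_eq_zero] using hfactor

-- `∏ j ∈ Finset.range n, c j` is `a_{n-1}`, and `1` for `n = 0`.
structure IsConwayTower (c : ℕ → AlgebraicClosure (ZMod 2)) : Prop where
  sq_add_self_add_prod : ∀ n, c n ^ 2 + c n + ∏ j ∈ Finset.range n, c j = 0
  notMem_conwayL : ∀ n, c n ∉ conwayL c n

section ConwayL

variable {c : ℕ → AlgebraicClosure (ZMod 2)}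

theorem conwayL_zero : conwayL c 0 = ⊥ := by
  simp [conwayL]

theorem mem_conwayL_of_lt {j n : ℕ} (h : j < n) : c j ∈ conwayL c n :=
  subset_adjoin _ _ ⟨j, h, rfl⟩

theorem prod_mem_conwayL (n : ℕ) : ∏ j ∈ Finset.range n, c j ∈ conwayL c n :=
  prod_mem fun _ hj => mem_conwayL_of_lt (Finset.mem_range.mp hj)

theorem conwayL_succ (n : ℕ) :
    conwayL c (n + 1) = (conwayL c n)⟮c n⟯.restrictScalars (ZMod 2) := by
  rw [conwayL, conwayL, ← Order.succ_eq_add_one, Order.Iio_succ_eq_insert, Set.image_insert_eq,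
    ← Set.union_singleton, adjoin_adjoin_left]

end ConwayL

namespace IsConwayTower

variable {c : ℕ → AlgebraicClosure (ZMod 2)} (hc : IsConwayTower c)
include hc

theorem natCard_conwayL (n : ℕ) : Nat.card (conwayL c n) = 2 ^ 2 ^ n := by
  induction n with
  | zero => rw [conwayL_zero, Nat.card_congr (botEquiv (ZMod 2) _).toEquiv, Nat.card_zmod]; rfl
  | succ n ih =>
    have := Nat.finite_of_card_ne_zero (ih ▸ (by positivity : 2 ^ 2 ^ n ≠ 0))
    have hcard := natCard_adjoin_simple_of_sq_add_self_add (K := conwayL c n)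
      ⟨_, prod_mem_conwayL n⟩ (by rintro ⟨y, hy⟩; exact hc.notMem_conwayL n (hy ▸ y.2))
      (hc.sq_add_self_add_prod n)
    rw [conwayL_succ, pow_succ 2 n, pow_mul, ← ih, ← hcard]
    rfl

theorem mem_conwayL_iff {n : ℕ} {x : AlgebraicClosure (ZMod 2)} :
    x ∈ conwayL c n ↔ x ^ 2 ^ 2 ^ n = x := by
  have := Nat.finite_of_card_ne_zero (hc.natCard_conwayL n ▸ (by positivity : 2 ^ 2 ^ n ≠ 0))
  rw [mem_iff_pow_natCard_eq, hc.natCard_conwayL]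

theorem mem_conwayL_iff_pow_eq_one {n : ℕ} {x : AlgebraicClosure (ZMod 2)} (hx : x ≠ 0) :
    x ∈ conwayL c n ↔ x ^ (2 ^ 2 ^ n - 1) = 1 := by
  have : x ^ 2 ^ 2 ^ n = x ^ (2 ^ 2 ^ n - 1) * x := by
    rw [← pow_succ, Nat.sub_add_cancel Nat.one_le_two_pow]
  rw [hc.mem_conwayL_iff, this, mul_eq_right₀ hx]

theorem prod_range_ne_zero (n : ℕ) : ∏ j ∈ Finset.range n, c j ≠ 0 := by
  induction n with
  | zero => simp
  | succ n ih =>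
    rw [Finset.prod_range_succ]
    refine mul_ne_zero ih fun h => ih ?_
    simpa [h] using hc.sq_add_self_add_prod n

theorem ne_zero (n : ℕ) : c n ≠ 0 := fun h =>
  hc.prod_range_ne_zero n (by simpa [h] using hc.sq_add_self_add_prod n)

theorem pow_two_pow_two_pow (n : ℕ) : c n ^ 2 ^ 2 ^ n = c n + 1 := by
  have hquad : c n ^ 2 + c n = ∏ j ∈ Finset.range n, c j :=
    CharTwo.add_eq_zero.mp (hc.sq_add_self_add_prod n)
  have hfrob : (c n ^ 2 ^ 2 ^ n) ^ 2 + c n ^ 2 ^ 2 ^ n = c n ^ 2 + c n := by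
    rw [← pow_right_comm, ← add_pow_char_pow, hquad, ← hc.mem_conwayL_iff]
    exact prod_mem_conwayL n
  refine (CharTwo.eq_or_eq_add_one_of_sq_add_self_eq hfrob).resolve_left fun h => ?_
  exact hc.notMem_conwayL n (hc.mem_conwayL_iff.mpr h)

theorem pow_fermatN (n : ℕ) : c n ^ fermatN n = ∏ j ∈ Finset.range n, c j := by
  rw [fermatN, pow_succ, hc.pow_two_pow_two_pow,
    ← CharTwo.add_eq_zero.mp (hc.sq_add_self_add_prod n)]
  ring

theorem pow_mem_conwayL_iff (n m : ℕ) :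
    c n ^ m ∈ conwayL c n ↔ (c n ^ (2 ^ 2 ^ n - 1)) ^ m = 1 := by
  rw [hc.mem_conwayL_iff_pow_eq_one (pow_ne_zero m (hc.ne_zero n)), pow_right_comm]

theorem pow_pow_fermatN (n : ℕ) : (c n ^ (2 ^ 2 ^ n - 1)) ^ fermatN n = 1 :=
  (hc.pow_mem_conwayL_iff n _).mp (hc.pow_fermatN n ▸ prod_mem_conwayL n)

theorem isLeast_pow_mem_conwayL (n : ℕ) :
    IsLeast {m | 0 < m ∧ c n ^ m ∈ conwayL c n} (orderOf (c n ^ (2 ^ 2 ^ n - 1))) := by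
  simp only [hc.pow_mem_conwayL_iff]
  have hfin : IsOfFinOrder (c n ^ (2 ^ 2 ^ n - 1)) :=
    isOfFinOrder_iff_pow_eq_one.mpr ⟨_, by unfold fermatN; positivity, hc.pow_pow_fermatN n⟩
  exact ⟨⟨hfin.orderOf_pos, pow_orderOf_eq_one _⟩,
    fun m hm => orderOf_le_of_pow_eq_one hm.1 hm.2⟩

theorem orderOf_pow_eq_fermatN_of_prime {n : ℕ} (hp : (fermatN n).Prime) :
    orderOf (c n ^ (2 ^ 2 ^ n - 1)) = fermatN n := by
  have hdvd := orderOf_dvd_of_pow_eq_one (hc.pow_pow_fermatN n)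
  refine (hp.eq_one_or_self_of_dvd _ hdvd).resolve_left fun h => hc.notMem_conwayL n ?_
  simpa using (hc.pow_mem_conwayL_iff n 1).mpr (by simpa using orderOf_eq_one_iff.mp h)

theorem orderOf_prod_range_succ_succ {k : ℕ}
    (hk : orderOf (c (k + 1) ^ (2 ^ 2 ^ (k + 1) - 1)) = fermatN (k + 1))
    (h : orderOf ((∏ j ∈ Finset.range (k + 1), c j) ^ (fermatN (k + 1) + 1)) =
      ∏ j ∈ Finset.Ioc 0 k, fermatN j) :
    orderOf (∏ j ∈ Finset.range (k + 2), c j) = ∏ j ∈ Finset.Ioc 0 (k + 1), fermatN j := by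
  have hpow : (∏ j ∈ Finset.range (k + 2), c j) ^ fermatN (k + 1) =
      (∏ j ∈ Finset.range (k + 1), c j) ^ (fermatN (k + 1) + 1) := by
    rw [Finset.prod_range_succ _ (k + 1), mul_pow, hc.pow_fermatN, pow_succ]
  have hdvd : fermatN (k + 1) ∣ orderOf (∏ j ∈ Finset.range (k + 2), c j) := by
    have : (∏ j ∈ Finset.range (k + 2), c j) ^ (2 ^ 2 ^ (k + 1) - 1) =
        c (k + 1) ^ (2 ^ 2 ^ (k + 1) - 1) := by
      rw [Finset.prod_range_succ _ (k + 1), mul_pow, (hc.mem_conwayL_iff_pow_eq_one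
        (hc.prod_range_ne_zero _)).mp (prod_mem_conwayL _), one_mul]
    rw [← hk, ← this]
    exact orderOf_pow_dvd _
  rw [orderOf_eq_mul_orderOf_pow (hpow ▸ h ▸ (coprime_fermatN_prod_Ioc k)) hdvd, hpow, h,
    Finset.prod_Ioc_succ_top k.zero_le, mul_comm]

theorem orderOf_prod_range_succ {k : ℕ} (hk : 1 ≤ k)
    (hord : ∀ j ≤ k, orderOf (c j ^ (2 ^ 2 ^ j - 1)) = fermatN j) :
    orderOf (∏ j ∈ Finset.range (k + 1), c j) = ∏ j ∈ Finset.Ioc 0 k, fermatN j := by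
  induction k, hk using Nat.le_induction with
  | base =>
    refine hc.orderOf_prod_range_succ_succ (hord 1 le_rfl) ?_
    have h3 : orderOf (c 0) = 3 := by simpa [fermatN] using hord 0 (Nat.zero_le 1)
    simpa [fermatN] using orderOf_dvd_iff_pow_eq_one.mp (h3 ▸ (by norm_num : 3 ∣ 6))
  | succ k hk ih =>
    have ih := ih fun j hj => hord j (hj.trans k.le_succ)
    refine hc.orderOf_prod_range_succ_succ (hord (k + 1) le_rfl) ?_
    rw [Nat.Coprime.orderOf_pow (ih ▸ coprime_prod_fermatN_Ioc_fermatN_succ_add_one k), ih]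

theorem orderOf_eq_prod_fermatN_Ioc {k : ℕ} (hk : 2 ≤ k)
    (hord : ∀ j ≤ k, orderOf (c j ^ (2 ^ 2 ^ j - 1)) = fermatN j) :
    orderOf (c k) = ∏ j ∈ Finset.Ioc 0 k, fermatN j := by
  obtain ⟨k, rfl⟩ : ∃ m, k = m + 1 := ⟨k - 1, by omega⟩
  have hprod := hc.orderOf_prod_range_succ (by omega) fun j hj => hord j (hj.trans k.le_succ)
  rw [orderOf_eq_mul_orderOf_pow (n := fermatN (k + 1)), hc.pow_fermatN, hprod,
    Finset.prod_Ioc_succ_top k.zero_le, mul_comm]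
  · rw [hc.pow_fermatN, hprod]
    exact coprime_fermatN_prod_Ioc k
  · exact hord (k + 1) le_rfl ▸ orderOf_pow_dvd _

end IsConwayTower

theorem IsConwayTower.of_zero_of_succ {c : ℕ → AlgebraicClosure (ZMod 2)}
    (hc0 : c 0 ^ 2 + c 0 + 1 = 0)
    (hrec : ∀ i : ℕ, c (i + 1) ^ 2 + c (i + 1) + ∏ j ∈ Finset.range (i + 1), c j = 0)
    (hnot : ∀ i : ℕ, c (i + 1) ∉ conwayL c (i + 1)) : IsConwayTower c where
  sq_add_self_add_prod
    | 0 => by simpa using hc0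
    | n + 1 => hrec n
  notMem_conwayL
    | 0 => by
      rw [conwayL_zero, mem_bot]
      rintro ⟨r, hr⟩
      obtain rfl | rfl : r = 0 ∨ r = 1 := by clear hr; revert r; decide
      all_goals simp [← hr, CharTwo.add_self_eq_zero] at hc0
    | n + 1 => hnot n

/-- Let `i ≥ 5`, and suppose that for every `j` with `5 ≤ j ≤ i`, the Fermat
number `N_j` is the smallest positive integer `m` with `(c_j)^m ∈ L_{j−1}`
(here `conwayL c j` denotes `L_{j-1}`). Then `c_i · c_0` and `a_i · a_0`
(where `a_k = ∏_{j=0}^{k} c_j`, so `a_0 = c_0`) are primitive elements of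
`L_i`: each has multiplicative order `∏_{j=0}^{i} N_j = 2^(2^(i+1)) − 1`. -/
theorem conway_primitive_of_minimal (c : ℕ → AlgebraicClosure (ZMod 2))
    (hc0 : c 0 ^ 2 + c 0 + 1 = 0)
    (hrec : ∀ i : ℕ, c (i + 1) ^ 2 + c (i + 1) + ∏ j ∈ Finset.range (i + 1), c j = 0)
    (hnot : ∀ i : ℕ, c (i + 1) ∉ conwayL c (i + 1))
    (i : ℕ) (hi : 5 ≤ i)
    (hmin : ∀ j : ℕ, 5 ≤ j → j ≤ i →
      IsLeast {m : ℕ | 0 < m ∧ c j ^ m ∈ conwayL c j} (fermatN j)) :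
    orderOf (c i * c 0) = ∏ j ∈ Finset.Icc 0 i, fermatN j ∧
    orderOf ((∏ j ∈ Finset.range (i + 1), c j) * c 0) = ∏ j ∈ Finset.Icc 0 i, fermatN j ∧
    ∏ j ∈ Finset.Icc 0 i, fermatN j = 2 ^ 2 ^ (i + 1) - 1 := by
  have hc := IsConwayTower.of_zero_of_succ hc0 hrec hnot
  have hord : ∀ j ≤ i, orderOf (c j ^ (2 ^ 2 ^ j - 1)) = fermatN j := by
    intro j hj
    rcases lt_or_ge j 5 with hj5 | hj5
    · exact hc.orderOf_pow_eq_fermatN_of_prime (by interval_cases j <;> norm_num [fermatN])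
    · exact (hc.isLeast_pow_mem_conwayL j).unique (hmin j hj5 hj)
  have hord0 : orderOf (c 0) = 3 := by simpa [fermatN] using hord 0 i.zero_le
  have hmul : ∀ x, orderOf x = ∏ j ∈ Finset.Ioc 0 i, fermatN j →
      orderOf (x * c 0) = ∏ j ∈ Finset.Icc 0 i, fermatN j := fun x hx => by
    rw [(Commute.all _ _).orderOf_mul_eq_mul_orderOf_of_coprime (by
        rw [hx, hord0]; exact (coprime_three_prod_fermatN_Ioc i).symm), hx, hord0,
      prod_fermatN_Icc_zero, mul_comm]
  refine ⟨hmul _ (hc.orderOf_eq_prod_fermatN_Ioc (by omega) hord),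
    hmul _ (hc.orderOf_prod_range_succ (by omega) hord), ?_⟩
  rw [← Nat.range_succ_eq_Icc_zero, prod_fermatN_range]
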